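/- arXiv:1309.0457 — 2 statements merged into one kernel-verified Lean document; each statement's English description precedes it below -/
import Mathlib

section
/- Moreover, the pair (ψ₁, ψ₂) parametrizing a nonzero element of the null quadric via the Segre map is unique up to simultaneous multiplication of (ψ₁, ψ₂) by −1. -/
/-- The pair `(ψ₁, ψ₂)` parametrizing a nonzero element of the null quadric via
the Segre map is unique up to a simultaneous sign change. -/
theorem segre_unique_up_to_sign (ψ₁ ψ₂ φ₁ φ₂ : ℂ)
    (hne : ¬ (Complex.I / 2 * ((starRingEnd ℂ) ψ₂ ^ 2 + ψ₁ ^ 2) = 0 ∧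
              (1 / 2 : ℂ) * ((starRingEnd ℂ) ψ₂ ^ 2 - ψ₁ ^ 2) = 0 ∧
              ψ₁ * (starRingEnd ℂ) ψ₂ = 0))
    (h1 : Complex.I / 2 * ((starRingEnd ℂ) φ₂ ^ 2 + φ₁ ^ 2)
        = Complex.I / 2 * ((starRingEnd ℂ) ψ₂ ^ 2 + ψ₁ ^ 2))
    (h2 : (1 / 2 : ℂ) * ((starRingEnd ℂ) φ₂ ^ 2 - φ₁ ^ 2)
        = (1 / 2 : ℂ) * ((starRingEnd ℂ) ψ₂ ^ 2 - ψ₁ ^ 2))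
    (h3 : φ₁ * (starRingEnd ℂ) φ₂ = ψ₁ * (starRingEnd ℂ) ψ₂) :
    (φ₁ = ψ₁ ∧ φ₂ = ψ₂) ∨ (φ₁ = -ψ₁ ∧ φ₂ = -ψ₂) := by
  have hI : (Complex.I / 2 : ℂ) ≠ 0 := by
    simp [Complex.I_ne_zero]
  have h1' : (starRingEnd ℂ) φ₂ ^ 2 + φ₁ ^ 2 = (starRingEnd ℂ) ψ₂ ^ 2 + ψ₁ ^ 2 :=
    mul_left_cancel₀ hI h1
  have h2' : (starRingEnd ℂ) φ₂ ^ 2 - φ₁ ^ 2 = (starRingEnd ℂ) ψ₂ ^ 2 - ψ₁ ^ 2 :=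
    mul_left_cancel₀ (by norm_num) h2
  have e1 : φ₁ ^ 2 = ψ₁ ^ 2 := by linear_combination (h1' - h2') / 2
  have e2c : (starRingEnd ℂ) φ₂ ^ 2 = (starRingEnd ℂ) ψ₂ ^ 2 := by
    linear_combination (h1' + h2') / 2
  have e2 : φ₂ ^ 2 = ψ₂ ^ 2 := by
    have := congrArg (starRingEnd ℂ) e2c
    simpa using this
  have s1 : φ₁ = ψ₁ ∨ φ₁ = -ψ₁ := by
    have h : (φ₁ - ψ₁) * (φ₁ + ψ₁) = 0 := by linear_combination e1
    rcases mul_eq_zero.mp h with h | h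
    · left; linear_combination h
    · right; linear_combination h
  have s2 : φ₂ = ψ₂ ∨ φ₂ = -ψ₂ := by
    have h : (φ₂ - ψ₂) * (φ₂ + ψ₂) = 0 := by linear_combination e2
    rcases mul_eq_zero.mp h with h | h
    · left; linear_combination h
    · right; linear_combination h
  rcases s1 with r1 | r1 <;> rcases s2 with r2 | r2
  · exact Or.inl ⟨r1, r2⟩
  · -- φ₁ = ψ₁, φ₂ = -ψ₂ : then h3 gives ψ₁ * conj ψ₂ = 0
    have hz : ψ₁ * (starRingEnd ℂ) ψ₂ = 0 := by
      rw [r1, r2, map_neg] at h3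
      linear_combination -h3 / 2
    rcases mul_eq_zero.mp hz with h | h
    · exact Or.inr ⟨by rw [r1, h]; ring, r2⟩
    · have hψ : ψ₂ = 0 := by simpa using congrArg (starRingEnd ℂ) h
      exact Or.inl ⟨r1, by rw [r2, hψ]; ring⟩
  · -- φ₁ = -ψ₁, φ₂ = ψ₂
    have hz : ψ₁ * (starRingEnd ℂ) ψ₂ = 0 := by
      rw [r1, r2] at h3
      linear_combination -h3 / 2
    rcases mul_eq_zero.mp hz with h | h
    · exact Or.inl ⟨by rw [r1, h]; ring, r2⟩
    · have hψ : ψ₂ = 0 := by simpa using congrArg (starRingEnd ℂ) h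
      exact Or.inr ⟨r1, by rw [r2, hψ]; ring⟩
  · exact Or.inr ⟨r1, r2⟩
end

section
/- Let A, B: U → ℍ \ {0} be smooth on an open set U ⊂ ℂ, and suppose there is a complex-valued function h with (∂z\∂A)·A⁻¹ = −h j and (∂z̄\∂B)·B⁻¹ = h j (where ∂z\∂A = (A_x − i A_y)/2 and ∂z̄\∂B = (B_x + i B_y)/2, with i ∈ ℍ multiplying on the left). Then the ℍ-valued 1-form ξ = Ā dz B = Ā B dx + Ā i B dy is closed. -/
/-!
Differentiating `Ā i B` in `x` and `Ā B` in `y` by the product rule, the Dirac equations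
`A_x = i A_y - 2 h j A` and `B_x = 2 h j B - i B_y` turn the difference of the two derivatives into
`Ā (i w - w̄ i) B` with `w = 2 h j`, using only `ī = -i` and `i² = -1`. Since `w` lies in the span
of `j` and `k`, it is purely imaginary and anticommutes with `i`, so `w̄ i = -w i = i w`.
-/

/-- The quaternion unit `i`. -/
def qi : Quaternion ℝ := ⟨0, 1, 0, 0⟩

/-- The quaternion unit `j`. -/
def qj : Quaternion ℝ := ⟨0, 0, 1, 0⟩

/-- The embedding of `ℂ = ℝ ⊕ ℝi` into the quaternions. -/
def cq (z : ℂ) : Quaternion ℝ := ⟨z.re, z.im, 0, 0⟩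

instance Quaternion.instStarModule {R : Type*} [CommRing R] [Star R] [TrivialStar R] :
    StarModule R (Quaternion R) :=
  ⟨fun r a => by rw [Quaternion.star_smul, star_trivial r]⟩

theorem fderiv_star_mul_const_mul_apply {𝕜 E 𝔸 : Type*} [NontriviallyNormedField 𝕜]
    [StarRing 𝕜] [TrivialStar 𝕜] [NormedAddCommGroup E] [NormedSpace 𝕜 E] [NormedRing 𝔸]
    [NormedAlgebra 𝕜 𝔸] [StarRing 𝔸] [StarModule 𝕜 𝔸] [ContinuousStar 𝔸] {A B : E → 𝔸} {p : E}
    (hA : DifferentiableAt 𝕜 A p) (hB : DifferentiableAt 𝕜 B p) (c : 𝔸) (v : E) :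
    fderiv 𝕜 (fun q => star (A q) * c * B q) p v
      = star (fderiv 𝕜 A p v) * c * B p + star (A p) * c * fderiv 𝕜 B p v := by
  rw [fderiv_fun_mul' (hA.star.mul_const c) hB, fderiv_mul_const' hA.star, fderiv_star]
  simp [add_comm]

theorem star_mul_mul_add_star_mul_mul_of_dirac {R : Type*} [Ring R] [StarRing R]
    {ι w a a' ax b b' bx : R} (hι : star ι = -ι) (hιι : ι * ι = -1) (hw : star w * ι = ι * w)
    (ha : ax - ι * a' = -w * a) (hb : bx + ι * b' = w * b) :
    star ax * ι * b + star a * ι * bx = star a' * b + star a * b' := by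
  rw [sub_eq_iff_eq_add'] at ha
  rw [← eq_sub_iff_add_eq] at hb
  calc star ax * ι * b + star a * ι * bx
      = star a' * -(ι * ι) * b + star a * (ι * w - star w * ι) * b + star a * -(ι * ι) * b' := by
        rw [ha, hb]; simp only [star_add, star_mul, star_neg, hι]; noncomm_ring
    _ = star a' * b + star a * b' := by rw [hιι, hw]; noncomm_ring

theorem eq_two_smul_mul_of_half_smul_mul_inv_eq {D : Type*} [DivisionRing D] [Algebra ℝ D]
    {s a w : D} (ha : a ≠ 0) (h : ((1 : ℝ) / 2) • s * a⁻¹ = w) : s = (2 : ℝ) • w * a := by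
  rw [← h, smul_mul_assoc, inv_mul_cancel_right₀ ha, smul_smul]
  norm_num

section QuaternionUnits

open Quaternion

theorem qi_mul_qi : qi * qi = -1 := by
  simp only [Quaternion.ext_iff, re_mul, imI_mul, imJ_mul, imK_mul, re_neg, imI_neg, imJ_neg,
    imK_neg, re_one, imI_one, imJ_one, imK_one]
  norm_num [qi]

theorem star_qi : star qi = -qi := by
  simp only [Quaternion.ext_iff, re_star, imI_star, imJ_star, imK_star, re_neg, imI_neg, imJ_neg,
    imK_neg]
  norm_num [qi]

theorem star_cq_mul_qj_mul_qi (z : ℂ) : star (cq z * qj) * qi = qi * (cq z * qj) := by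
  simp only [Quaternion.ext_iff, re_mul, imI_mul, imJ_mul, imK_mul, re_star, imI_star, imJ_star,
    imK_star]
  norm_num [qi, qj, cq]

end QuaternionUnits

/-- If nonvanishing smooth `A, B : U → ℍ` satisfy the Konopelchenko–Taimanov Dirac
equations `(∂z\∂A)A⁻¹ = −h j` and `(∂z̄\∂B)B⁻¹ = h j` for some complex potential `h`,
then the `ℍ`-valued 1-form `ξ = Ā dz B = Ā B dx + Ā i B dy` is closed, i.e.
`∂ₓ(Ā i B) = ∂ᵧ(Ā B)` on `U`. -/
theorem KT_dirac_implies_closed (U : Set (ℝ × ℝ)) (hU : IsOpen U)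
    (A B : ℝ × ℝ → Quaternion ℝ) (h : ℝ × ℝ → ℂ)
    (hA : ContDiffOn ℝ 2 A U) (hB : ContDiffOn ℝ 2 B U)
    (hAne : ∀ p ∈ U, A p ≠ 0) (hBne : ∀ p ∈ U, B p ≠ 0)
    (hDiracA : ∀ p ∈ U,
      (((1 : ℝ) / 2) • (fderiv ℝ A p (1, 0) - qi * fderiv ℝ A p (0, 1))) * (A p)⁻¹
        = -(cq (h p)) * qj)
    (hDiracB : ∀ p ∈ U,
      (((1 : ℝ) / 2) • (fderiv ℝ B p (1, 0) + qi * fderiv ℝ B p (0, 1))) * (B p)⁻¹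
        = cq (h p) * qj) :
    ∀ p ∈ U,
      fderiv ℝ (fun q => star (A q) * qi * B q) p (1, 0)
        = fderiv ℝ (fun q => star (A q) * B q) p (0, 1) := by
  intro p hp
  have hAd : DifferentiableAt ℝ A p :=
    (hA.contDiffAt (hU.mem_nhds hp)).differentiableAt two_ne_zero
  have hBd : DifferentiableAt ℝ B p :=
    (hB.contDiffAt (hU.mem_nhds hp)).differentiableAt two_ne_zero
  have hw : star ((2 : ℝ) • (cq (h p) * qj)) * qi = qi * ((2 : ℝ) • (cq (h p) * qj)) := by
    rw [star_smul, star_trivial, smul_mul_assoc, mul_smul_comm, star_cq_mul_qj_mul_qi]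
  have hAx : fderiv ℝ A p (1, 0) - qi * fderiv ℝ A p (0, 1)
      = -((2 : ℝ) • (cq (h p) * qj)) * A p := by
    rw [eq_two_smul_mul_of_half_smul_mul_inv_eq (hAne p hp) (hDiracA p hp), neg_mul, smul_neg]
  have hBx : fderiv ℝ B p (1, 0) + qi * fderiv ℝ B p (0, 1)
      = ((2 : ℝ) • (cq (h p) * qj)) * B p :=
    eq_two_smul_mul_of_half_smul_mul_inv_eq (hBne p hp) (hDiracB p hp)
  have hAB : fderiv ℝ (fun q => star (A q) * B q) p (0, 1)
      = star (fderiv ℝ A p (0, 1)) * B p + star (A p) * fderiv ℝ B p (0, 1) := by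
    simpa only [mul_one] using fderiv_star_mul_const_mul_apply hAd hBd 1 (0, 1)
  rw [fderiv_star_mul_const_mul_apply hAd hBd, hAB]
  exact star_mul_mul_add_star_mul_mul_of_dirac star_qi qi_mul_qi hw hAx hBx
end
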